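/- For every n ≥ 2, f_0(n-1) > f_0(n) - 1/√2. -/

import Mathlib

open Real Matrix

/-- `simplexInCube n ℓ` : an isometric copy of the regular n-simplex of edge length ℓ
with barycenter at the origin is contained in the cube [-1/2, 1/2]ⁿ. -/
def simplexInCube (n : ℕ) (ℓ : ℝ) : Prop :=
  ∃ p : Fin (n + 1) → EuclideanSpace ℝ (Fin n),
    (∀ i j, i ≠ j → dist (p i) (p j) = ℓ) ∧ (∑ i, p i = 0) ∧
    ∀ i k, |p i k| ≤ 1 / 2

/-- `f0 n` : the largest edge length of a regular n-simplex with barycenter at the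
origin contained in the unit cube. -/
noncomputable def f0 (n : ℕ) : ℝ := sSup {ℓ : ℝ | simplexInCube n ℓ}

/-!
Let `p` be a regular `(n+1)`-simplex of edge `L` centred at `0` in `[-1/2, 1/2]^(n+1)`, and let
`w` be a vertex with largest coordinate `|w m|`, which we may take to be negative. The other
vertices form a regular `n`-simplex in the hyperplane `⟪w, ·⟫ = -L² / (2(n+2))`, with barycentre
`-w / (n+1)`. The Householder reflection sending `w` to `‖w‖ • e_m` maps this hyperplane onto a
hyperplane `x_m = const` and the barycentre onto the `e_m`-axis, so deleting the coordinate `m`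
gives a centred regular `n`-simplex of edge `L` in `ℝⁿ`. Its coordinates exceed `1/2` only by a
term controlled by `|w m| ≤ 1/2` and `‖w‖² ≤ (n+1)/4`; shrinking it into the cube costs at most
`√(n+2) / (√2 (√(n+1) + 1)) < 1/√2` of the edge length.
-/

open scoped RealInnerProductSpace

section RegularSimplex

variable {E ι : Type*} [NormedAddCommGroup E] [Fintype ι] {p : ι → E} {L : ℝ}

theorem sum_norm_sub_sq_of_dist_eq [DecidableEq ι]
    (hd : ∀ i j, i ≠ j → dist (p i) (p j) = L) (i : ι) :
    ∑ j, ‖p i - p j‖ ^ 2 = (Fintype.card ι - 1) * L ^ 2 := by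
  rw [← Finset.add_sum_erase _ _ (Finset.mem_univ i), sub_self, norm_zero,
    Finset.sum_congr rfl fun j hj => by
      rw [← dist_eq_norm, hd i j (Finset.ne_of_mem_erase hj).symm]]
  have : Nonempty ι := ⟨i⟩
  simp [Finset.card_erase_of_mem, Nat.cast_pred Fintype.card_pos]

variable [InnerProductSpace ℝ E]

theorem sum_norm_sub_sq_of_sum_eq_zero (hs : ∑ i, p i = 0) (i : ι) :
    ∑ j, ‖p i - p j‖ ^ 2 = Fintype.card ι * ‖p i‖ ^ 2 + ∑ j, ‖p j‖ ^ 2 := by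
  simp only [norm_sub_sq_real, Finset.sum_add_distrib, Finset.sum_sub_distrib,
    ← Finset.mul_sum, ← inner_sum, hs, inner_zero_right]
  simp

theorem norm_sq_eq_of_dist_eq_of_sum_eq_zero
    (hd : ∀ i j, i ≠ j → dist (p i) (p j) = L) (hs : ∑ i, p i = 0) (i : ι) :
    ‖p i‖ ^ 2 = (Fintype.card ι - 1) * L ^ 2 / (2 * Fintype.card ι) := by
  classical
  have hc : (0 : ℝ) < Fintype.card ι := by exact_mod_cast Fintype.card_pos_iff.2 ⟨i⟩
  have hrow j := (sum_norm_sub_sq_of_sum_eq_zero hs j).symm.trans (sum_norm_sub_sq_of_dist_eq hd j)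
  have htotal : ∑ j, ‖p j‖ ^ 2 = (Fintype.card ι - 1) * L ^ 2 / 2 := by
    have hsum := Finset.sum_congr rfl fun j (_ : j ∈ Finset.univ) => hrow j
    simp only [Finset.sum_add_distrib, ← Finset.mul_sum, Finset.sum_const, Finset.card_univ,
      nsmul_eq_mul] at hsum
    field_simp
    nlinarith
  have hi := hrow i
  rw [htotal] at hi
  field_simp
  linarith

theorem inner_eq_of_dist_eq_of_sum_eq_zero
    (hd : ∀ i j, i ≠ j → dist (p i) (p j) = L) (hs : ∑ i, p i = 0) {i j : ι} (hij : i ≠ j) :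
    ⟪p i, p j⟫ = -L ^ 2 / (2 * Fintype.card ι) := by
  have hc : (0 : ℝ) < Fintype.card ι := by exact_mod_cast Fintype.card_pos_iff.2 ⟨i⟩
  have h := norm_sub_sq_real (p i) (p j)
  rw [← dist_eq_norm, hd i j hij, norm_sq_eq_of_dist_eq_of_sum_eq_zero hd hs,
    norm_sq_eq_of_dist_eq_of_sum_eq_zero hd hs] at h
  field_simp at h ⊢
  linarith

end RegularSimplex

theorem reflection_orthogonalComplement_singleton_apply {F : Type*} [NormedAddCommGroup F]
    [InnerProductSpace ℝ F] (v x : F) :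
    (ℝ ∙ v)ᗮ.reflection x = x - (2 * ⟪v, x⟫ / ‖v‖ ^ 2) • v := by
  rw [Submodule.reflection_orthogonal_apply, Submodule.reflection_singleton_apply, mul_div_assoc]
  module

section Householder

variable {n : ℕ}

def dropCoord (m : Fin (n + 1)) :
    EuclideanSpace ℝ (Fin (n + 1)) →ₗ[ℝ] EuclideanSpace ℝ (Fin n) where
  toFun x := WithLp.toLp 2 fun j => x (m.succAbove j)
  map_add' _ _ := rfl
  map_smul' _ _ := rfl

@[simp]
theorem dropCoord_apply (m : Fin (n + 1)) (x : EuclideanSpace ℝ (Fin (n + 1))) (j : Fin n) :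
    dropCoord m x j = x (m.succAbove j) := rfl

theorem dropCoord_single (m : Fin (n + 1)) (a : ℝ) :
    dropCoord m (EuclideanSpace.single m a) = 0 := by
  ext j
  simp [Fin.succAbove_ne]

theorem norm_dropCoord_of_apply_eq_zero {m : Fin (n + 1)} {x : EuclideanSpace ℝ (Fin (n + 1))}
    (hx : x m = 0) : ‖dropCoord m x‖ = ‖x‖ := by
  refine (pow_left_inj₀ (norm_nonneg _) (norm_nonneg _) two_ne_zero).1 ?_
  simp only [EuclideanSpace.real_norm_sq_eq, Fin.sum_univ_succAbove _ m, dropCoord_apply, hx]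
  ring

noncomputable def householder (w : EuclideanSpace ℝ (Fin n)) (m : Fin n) :
    EuclideanSpace ℝ (Fin n) ≃ₗᵢ[ℝ] EuclideanSpace ℝ (Fin n) :=
  (ℝ ∙ (w - EuclideanSpace.single m ‖w‖))ᗮ.reflection

theorem householder_apply_self (w : EuclideanSpace ℝ (Fin n)) (m : Fin n) :
    householder w m w = EuclideanSpace.single m ‖w‖ :=
  Submodule.reflection_sub (by simp)

theorem norm_mul_householder_apply (w x : EuclideanSpace ℝ (Fin n)) (m : Fin n) :
    ‖w‖ * householder w m x m = ⟪w, x⟫ := by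
  rw [← (householder w m).inner_map_map, householder_apply_self,
    EuclideanSpace.inner_single_left]
  simp

theorem householder_apply_of_ne (w x : EuclideanSpace ℝ (Fin n)) {m j : Fin n} (hj : j ≠ m) :
    householder w m x j = x j - (⟪w, x⟫ - ‖w‖ * x m) / (‖w‖ * (‖w‖ - w m)) * w j := by
  have hv : ‖w - EuclideanSpace.single m ‖w‖‖ ^ 2 = 2 * (‖w‖ * (‖w‖ - w m)) := by
    rw [norm_sub_sq_real, EuclideanSpace.inner_single_right]
    simp only [Real.ringHom_apply, PiLp.norm_single, norm_norm]
    ring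
  rw [householder, reflection_orthogonalComplement_singleton_apply, hv, inner_sub_left,
    EuclideanSpace.inner_single_left, mul_div_mul_left _ _ two_ne_zero]
  simp [hj]

theorem dist_dropCoord_householder {w x x' : EuclideanSpace ℝ (Fin (n + 1))} (hw : w ≠ 0)
    (m : Fin (n + 1)) (h : ⟪w, x⟫ = ⟪w, x'⟫) :
    dist (dropCoord m (householder w m x)) (dropCoord m (householder w m x')) = dist x x' := by
  have hm : householder w m x m = householder w m x' m :=
    mul_left_cancel₀ (norm_ne_zero_iff.2 hw) (by
      rw [norm_mul_householder_apply, norm_mul_householder_apply, h])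
  rw [dist_eq_norm, dist_eq_norm, ← map_sub,
    norm_dropCoord_of_apply_eq_zero (by rw [PiLp.sub_apply, hm, sub_self]), ← map_sub,
    LinearIsometryEquiv.norm_map]

theorem abs_householder_apply_le {w x : EuclideanSpace ℝ (Fin n)} {m j : Fin n} {η : ℝ}
    (hw : 0 < ‖w‖) (hη : 0 ≤ η) (hwx : ⟪w, x⟫ = -η) (hx : ∀ i, |x i| ≤ 1 / 2)
    (hm : ∀ i, |w i| ≤ -w m) (hwm : -w m ≤ 1 / 2) (hj : j ≠ m) :
    |householder w m x j| ≤ (‖w‖ ^ 2 + ‖w‖ + η) / (‖w‖ * (2 * ‖w‖ + 1)) := by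
  have hden : 0 < ‖w‖ * (‖w‖ - w m) := mul_pos hw (by linarith [(abs_nonneg _).trans (hm m)])
  have hshift : |⟪w, x⟫ - ‖w‖ * x m| ≤ η + ‖w‖ / 2 := by
    rw [hwx, abs_le]
    have := abs_le.1 (hx m)
    constructor <;> nlinarith
  have hratio : |w j| / (‖w‖ * (‖w‖ - w m)) ≤ 1 / (‖w‖ * (2 * ‖w‖ + 1)) := by
    rw [div_le_div_iff₀ hden (by positivity)]
    have : |w j| * (2 * ‖w‖ + 1) ≤ ‖w‖ - w m := by nlinarith [hm j]
    nlinarith [mul_le_mul_of_nonneg_left this hw.le]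
  rw [householder_apply_of_ne w x hj]
  calc |x j - (⟪w, x⟫ - ‖w‖ * x m) / (‖w‖ * (‖w‖ - w m)) * w j|
      ≤ |x j| + |⟪w, x⟫ - ‖w‖ * x m| * (|w j| / (‖w‖ * (‖w‖ - w m))) := by
        refine (abs_sub _ _).trans_eq ?_
        rw [abs_mul, abs_div, abs_of_pos hden]
        ring
    _ ≤ 1 / 2 + (η + ‖w‖ / 2) * (1 / (‖w‖ * (2 * ‖w‖ + 1))) :=
        add_le_add (hx j) (mul_le_mul hshift hratio (by positivity) (by positivity))
    _ = (‖w‖ ^ 2 + ‖w‖ + η) / (‖w‖ * (2 * ‖w‖ + 1)) := by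
        field_simp
        ring

end Householder

theorem norm_sq_le_of_abs_le_half {n : ℕ} {x : EuclideanSpace ℝ (Fin n)}
    (hx : ∀ i, |x i| ≤ 1 / 2) : 4 * ‖x‖ ^ 2 ≤ n := by
  rw [EuclideanSpace.real_norm_sq_eq, Finset.mul_sum]
  calc ∑ i, 4 * x i ^ 2 ≤ ∑ _i : Fin n, (1 : ℝ) :=
        Finset.sum_le_sum fun i _ => by nlinarith [sq_abs (x i), abs_nonneg (x i), hx i]
    _ = n := by simp

theorem simplexInCube_zero (n : ℕ) : simplexInCube n 0 :=
  ⟨0, by simp, by simp, by simp⟩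

theorem simplexInCube_div {n : ℕ} {p : Fin (n + 1) → EuclideanSpace ℝ (Fin n)} {L B : ℝ}
    (hB : 0 < B) (hd : ∀ i j, i ≠ j → dist (p i) (p j) = L) (hs : ∑ i, p i = 0)
    (hbox : ∀ i j, |p i j| ≤ B) : simplexInCube n (L / (2 * B)) := by
  refine ⟨fun i => (2 * B)⁻¹ • p i, fun i j hij => ?_, ?_, fun i j => ?_⟩
  · rw [dist_smul₀, hd i j hij, Real.norm_eq_abs, abs_of_pos (by positivity), inv_mul_eq_div]
  · rw [← Finset.smul_sum, hs, smul_zero]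
  · rw [PiLp.smul_apply, smul_eq_mul, abs_mul, abs_of_pos (by positivity)]
    calc (2 * B)⁻¹ * |p i j| ≤ (2 * B)⁻¹ * B := by gcongr; exact hbox i j
      _ = 1 / 2 := by field_simp

theorem bddAbove_simplexInCube {n : ℕ} (hn : 1 ≤ n) : BddAbove {ℓ | simplexInCube n ℓ} := by
  obtain ⟨k, rfl⟩ : ∃ k, n = k + 1 := ⟨n - 1, by omega⟩
  refine ⟨k + 1, fun ℓ ⟨p, hd, _, hbox⟩ => ?_⟩
  rw [← hd 0 (Fin.last _) Fin.last_pos.ne]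
  have hnorm (i) : ‖p i‖ ≤ (k + 1) / 2 := by
    have := norm_sq_le_of_abs_le_half (hbox i)
    push_cast at this
    nlinarith [norm_nonneg (p i)]
  linarith [dist_le_norm_add_norm (p 0) (p (Fin.last _)), hnorm 0, hnorm (Fin.last _)]

-- The worst case of the loss `L - ℓ` in `exists_facet_of_apex`: the apex is a vertex of the cube.
noncomputable def edgeLoss (n : ℕ) : ℝ := √(n + 2) / (√2 * (√(n + 1) + 1))

theorem edgeLoss_pos (n : ℕ) : 0 < edgeLoss n := by
  unfold edgeLoss
  positivity

theorem edgeLoss_lt (n : ℕ) : edgeLoss n < 1 / √2 := by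
  have hz : √((n : ℝ) + 2) < √((n : ℝ) + 1) + 1 := by
    rw [Real.sqrt_lt' (by positivity)]
    nlinarith [Real.sq_sqrt (show (0 : ℝ) ≤ n + 1 by positivity),
      Real.sqrt_pos.2 (show (0 : ℝ) < n + 1 by positivity)]
  unfold edgeLoss
  rw [div_lt_div_iff₀ (by positivity) (by positivity)]
  nlinarith [Real.sqrt_pos.2 (show (0 : ℝ) < 2 by norm_num)]

theorem le_div_add_edgeLoss {n : ℕ} {L r η : ℝ} (hL : 0 ≤ L) (hr : 0 < r)
    (hrn : 4 * r ^ 2 ≤ n + 1) (hη : r ^ 2 = (n + 1) * η) (hLη : L ^ 2 = 2 * (n + 2) * η) :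
    L ≤ L / (2 * ((r ^ 2 + r + η) / (r * (2 * r + 1)))) + edgeLoss n := by
  set x := √((n : ℝ) + 1)
  set z := √((n : ℝ) + 2)
  have hx2 : x ^ 2 = n + 1 := Real.sq_sqrt (by positivity)
  have hz2 : z ^ 2 = n + 2 := Real.sq_sqrt (by positivity)
  have hx0 : 0 < x := by positivity
  have hz0 : 0 < z := by positivity
  have h2 : √2 ^ 2 = 2 := Real.sq_sqrt (by norm_num)
  have hrx : 2 * r ≤ x := by nlinarith
  have hL' : L = √2 * z * r / x := by
    rw [eq_div_iff hx0.ne']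
    refine (pow_left_inj₀ (by positivity) (by positivity) two_ne_zero).1 ?_
    rw [mul_pow, mul_pow, mul_pow, h2, hx2, hz2, hLη, hη]
    ring
  have hη' : η = r ^ 2 / x ^ 2 := by rw [hx2, hη]; field_simp
  have key : r * (x ^ 2 + 2 * r) * (x + 1) ≤ x * (r * (x ^ 2 + 1) + x ^ 2) := by
    nlinarith [mul_nonpos_of_nonpos_of_nonneg (sub_nonpos.2 hrx)
      (show 0 ≤ (x + 1) * r + x ^ 2 by positivity)]
  rw [show edgeLoss n = z / (√2 * (x + 1)) from rfl, hL', hη']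
  field_simp
  rw [h2]
  nlinarith [mul_le_mul_of_nonneg_left key (by positivity : (0 : ℝ) ≤ 2 * x)]

theorem exists_facet_of_apex {n : ℕ} {p : Fin (n + 2) → EuclideanSpace ℝ (Fin (n + 1))} {L : ℝ}
    (hL : 0 < L) (hd : ∀ i j, i ≠ j → dist (p i) (p j) = L) (hs : ∑ i, p i = 0)
    (hbox : ∀ i j, |p i j| ≤ 1 / 2) {m : Fin (n + 1)}
    (hm : ∀ j, |p (Fin.last _) j| ≤ -p (Fin.last _) m) :
    ∃ ℓ, simplexInCube n ℓ ∧ L ≤ ℓ + edgeLoss n := by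
  set w := p (Fin.last (n + 1))
  set η := L ^ 2 / (2 * (n + 2))
  have hcard : (Fintype.card (Fin (n + 2)) : ℝ) = n + 2 := by simp
  have hw : ‖w‖ ^ 2 = (n + 1) * η := by
    rw [norm_sq_eq_of_dist_eq_of_sum_eq_zero hd hs, hcard]
    ring
  have hinner (a : Fin (n + 1)) : ⟪w, p a.castSucc⟫ = -η := by
    rw [inner_eq_of_dist_eq_of_sum_eq_zero hd hs (Fin.castSucc_lt_last a).ne', hcard]
    ring
  have hr : 0 < ‖w‖ :=
    lt_of_pow_lt_pow_left₀ 2 (norm_nonneg w) (by rw [hw, zero_pow two_ne_zero]; positivity)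
  have hrn : 4 * ‖w‖ ^ 2 ≤ n + 1 := by exact_mod_cast norm_sq_le_of_abs_le_half (hbox _)
  have hfacet : ∑ a : Fin (n + 1), p a.castSucc = -w := by
    rw [eq_neg_iff_add_eq_zero, ← Fin.sum_univ_castSucc, hs]
  let q (a : Fin (n + 1)) := dropCoord m (householder w m (p a.castSucc))
  have hq_dist (a b) (hab : a ≠ b) : dist (q a) (q b) = L := by
    rw [dist_dropCoord_householder (norm_pos_iff.1 hr) m (by rw [hinner, hinner]),
      hd _ _ (Fin.castSucc_injective _ |>.ne hab)]
  have hq_sum : ∑ a, q a = 0 := by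
    simp only [q, ← map_sum, hfacet, map_neg, householder_apply_self, dropCoord_single, neg_zero]
  have hq_box (a j) : |q a j| ≤ (‖w‖ ^ 2 + ‖w‖ + η) / (‖w‖ * (2 * ‖w‖ + 1)) := by
    rw [dropCoord_apply]
    exact abs_householder_apply_le hr (by positivity) (hinner a) (hbox _) hm
      ((neg_le_abs _).trans (hbox _ m)) (Fin.succAbove_ne m j)
  exact ⟨_, simplexInCube_div (by positivity) hq_dist hq_sum hq_box,
    le_div_add_edgeLoss hL.le hr hrn hw (by simp only [η]; field_simp)⟩

theorem exists_facet {n : ℕ} {L : ℝ} (h : simplexInCube (n + 1) L) :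
    ∃ ℓ, simplexInCube n ℓ ∧ L ≤ ℓ + edgeLoss n := by
  rcases le_or_gt L 0 with hL | hL
  · exact ⟨0, simplexInCube_zero n, by linarith [edgeLoss_pos n]⟩
  obtain ⟨p, hd, hs, hbox⟩ := h
  obtain ⟨m, -, hm⟩ := Finset.exists_max_image Finset.univ (fun j => |p (Fin.last _) j|)
    Finset.univ_nonempty
  rcases le_total (p (Fin.last _) m) 0 with hneg | hpos
  · exact exists_facet_of_apex hL hd hs hbox fun j => by
      simpa [abs_of_nonpos hneg] using hm j (Finset.mem_univ _)
  · refine exists_facet_of_apex (p := -p) hL (fun i j hij => by simpa using hd i j hij)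
      (by simp [hs]) (fun i j => by simpa using hbox i j) (m := m) fun j => ?_
    simpa [abs_of_nonneg hpos] using hm j (Finset.mem_univ _)

theorem f0_succ_le {n : ℕ} (hn : 1 ≤ n) : f0 (n + 1) ≤ f0 n + edgeLoss n := by
  have h0 : 0 ≤ f0 n := le_csSup (bddAbove_simplexInCube hn) (simplexInCube_zero n)
  refine Real.sSup_le (fun L hL => ?_) (by linarith [edgeLoss_pos n])
  obtain ⟨ℓ, hℓ, hLℓ⟩ := exists_facet hL
  have : ℓ ≤ f0 n := le_csSup (bddAbove_simplexInCube hn) hℓ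
  linarith

/-- f₀(n-1) > f₀(n) - 1/√2 for n ≥ 2 (stated with n-1 = k, k ≥ 1). -/
theorem stmt13 (k : ℕ) (hk : 1 ≤ k) : f0 k > f0 (k + 1) - 1 / Real.sqrt 2 := by
  linarith [f0_succ_le hk, edgeLoss_lt k]
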